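/- Let Q be a sub-rate matrix and A : Set ι. Then for every x : ι, the function t ↦ ∑ y ∈ A, (Matrix.exp ℝ (t • Q_A)) x y is antitone on [0, ∞): for 0 ≤ u ≤ t, ∑ y ∈ A, (Matrix.exp ℝ (t • Q_A)) x y ≤ ∑ y ∈ A, (Matrix.exp ℝ (u • Q_A)) x y. (Finite-state core of the time-monotonicity in Theorem 2.5(iv) of the paper: the probability of not yet having left the truncation is nonincreasing in time.) -/

import Mathlib

/-- Mathlib's exponential, specialized to real matrices (`Matrix.exp ℝ`). -/
noncomputable def Matrix.exp (𝕂 : Type*) [Field 𝕂] {ι : Type*} [Fintype ι] [DecidableEq ι]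
    [Algebra 𝕂 ℝ] (A : Matrix ι ι ℝ) : Matrix ι ι ℝ :=
  NormedSpace.exp A

open Classical in
/-- The truncation `Q_A` of `Q` to `A`: every state outside `A` is made absorbing. -/
noncomputable def Matrix.truncation {ι : Type*} (Q : Matrix ι ι ℝ) (A : Set ι) :
    Matrix ι ι ℝ :=
  Matrix.of fun x y => if x ∈ A then Q x y else 0

/-!
Write `M = Q_A`; every `s • M` with `s ≥ 0` is again Metzler with row sums `≤ 0`. For such a
matrix `N`, `N + c • 1` is entrywise nonnegative for `c` large, so
`exp N = e^{-c} • exp (N + c • 1)` has nonnegative entries, and comparing the exponential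
series of `N + c • 1` termwise with that of `e^c` bounds its row sums by `1`. The rows of `N`
outside `A` vanish, so the same rows of `exp N` are rows of the identity; hence
`exp (s • M) *ᵥ 1_A ≤ 1_A`. The mass on `A` is the `x`-entry of
`exp (t • M) *ᵥ 1_A = exp (u • M) *ᵥ (exp ((t - u) • M) *ᵥ 1_A)`, and `exp (u • M)` is monotone.
-/

open scoped Nat

namespace Matrix

section Metzler

variable {ι : Type*}

def IsMetzler (M : Matrix ι ι ℝ) : Prop :=
  ∀ x y, x ≠ y → 0 ≤ M x y

theorem IsMetzler.smul {M : Matrix ι ι ℝ} (hM : M.IsMetzler) {s : ℝ} (hs : 0 ≤ s) :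
    (s • M).IsMetzler :=
  fun x y hxy => mul_nonneg hs (hM x y hxy)

theorem truncation_apply_of_mem (Q : Matrix ι ι ℝ) {A : Set ι} {x : ι} (hx : x ∈ A) (y : ι) :
    Q.truncation A x y = Q x y :=
  if_pos hx

theorem truncation_apply_of_notMem (Q : Matrix ι ι ℝ) {A : Set ι} {x : ι} (hx : x ∉ A) (y : ι) :
    Q.truncation A x y = 0 :=
  if_neg hx

theorem IsMetzler.truncation {Q : Matrix ι ι ℝ} (hQ : Q.IsMetzler) (A : Set ι) :
    (Q.truncation A).IsMetzler := by
  intro x y hxy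
  by_cases hx : x ∈ A
  · rw [truncation_apply_of_mem Q hx]
    exact hQ x y hxy
  · rw [truncation_apply_of_notMem Q hx]

theorem truncation_mulVec_one_nonpos [Fintype ι] {Q : Matrix ι ι ℝ} (hQ : Q *ᵥ 1 ≤ 0)
    (A : Set ι) : Q.truncation A *ᵥ 1 ≤ 0 := by
  intro x
  by_cases hx : x ∈ A
  · simpa [mulVec, dotProduct, truncation_apply_of_mem Q hx] using hQ x
  · simp [mulVec, dotProduct, truncation_apply_of_notMem Q hx]

end Metzler

section NonnegMatrix

variable {ι R : Type*} [Fintype ι]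

section Semiring

variable [Semiring R] [PartialOrder R] [IsOrderedRing R]

theorem mulVec_nonneg {X : Matrix ι ι R} (hX : ∀ i j, 0 ≤ X i j) {v : ι → R} (hv : 0 ≤ v) :
    0 ≤ X *ᵥ v :=
  fun i => Finset.sum_nonneg fun j _ => mul_nonneg (hX i j) (hv j)

theorem mulVec_mono {X : Matrix ι ι R} (hX : ∀ i j, 0 ≤ X i j) {v w : ι → R} (hvw : v ≤ w) :
    X *ᵥ v ≤ X *ᵥ w :=
  fun i => Finset.sum_le_sum fun j _ => mul_le_mul_of_nonneg_left (hvw j) (hX i j)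

theorem pow_mulVec_nonneg [DecidableEq ι] {X : Matrix ι ι R} (hX : ∀ i j, 0 ≤ X i j)
    {v : ι → R} (hv : 0 ≤ v) (n : ℕ) : 0 ≤ X ^ n *ᵥ v := by
  induction n with
  | zero => simpa using hv
  | succ n ih => rw [pow_succ', ← mulVec_mulVec]; exact mulVec_nonneg hX ih

end Semiring

theorem pow_mulVec_le [DecidableEq ι] [CommSemiring R] [PartialOrder R] [IsOrderedRing R]
    {X : Matrix ι ι R} (hX : ∀ i j, 0 ≤ X i j) {c : R} (hc : 0 ≤ c) {v : ι → R}
    (hv : X *ᵥ v ≤ c • v) (n : ℕ) : X ^ n *ᵥ v ≤ c ^ n • v := by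
  induction n with
  | zero => simp
  | succ n ih =>
    calc X ^ (n + 1) *ᵥ v = X *ᵥ (X ^ n *ᵥ v) := by rw [pow_succ', mulVec_mulVec]
      _ ≤ X *ᵥ (c ^ n • v) := mulVec_mono hX ih
      _ = c ^ n • (X *ᵥ v) := mulVec_smul X _ v
      _ ≤ c ^ n • (c • v) := smul_le_smul_of_nonneg_left hv (pow_nonneg hc n)
      _ = c ^ (n + 1) • v := by rw [smul_smul, pow_succ]

end NonnegMatrix

section Exp

variable {ι : Type*} [Fintype ι] [DecidableEq ι]

theorem hasSum_exp_mulVec (X : Matrix ι ι ℝ) (v : ι → ℝ) :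
    HasSum (fun n : ℕ => (n !⁻¹ : ℝ) • (X ^ n *ᵥ v)) (NormedSpace.exp X *ᵥ v) := by
  let := Matrix.linftyOpNormedRing (n := ι) (α := ℝ)
  let := Matrix.linftyOpNormedAlgebra (n := ι) (R := ℝ) (α := ℝ)
  have h := (NormedSpace.exp_series_hasSum_exp' (𝕂 := ℝ) X).map
    (mulVec.addMonoidHomLeft v) (continuous_id.matrix_mulVec continuous_const)
  simp only [Function.comp_def, mulVec.addMonoidHomLeft, AddMonoidHom.coe_mk, ZeroHom.coe_mk,
    smul_mulVec] at h
  exact h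

theorem exp_mulVec_nonneg {X : Matrix ι ι ℝ} (hX : ∀ i j, 0 ≤ X i j) {v : ι → ℝ} (hv : 0 ≤ v) :
    0 ≤ NormedSpace.exp X *ᵥ v :=
  (hasSum_exp_mulVec X v).nonneg fun n => smul_nonneg (by positivity) (pow_mulVec_nonneg hX hv n)

theorem exp_mulVec_le {X : Matrix ι ι ℝ} (hX : ∀ i j, 0 ≤ X i j) {c : ℝ} (hc : 0 ≤ c)
    {v : ι → ℝ} (hv : X *ᵥ v ≤ c • v) : NormedSpace.exp X *ᵥ v ≤ Real.exp c • v := by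
  have hexp : HasSum (fun n : ℕ => ((n !⁻¹ : ℝ) • c ^ n) • v) (Real.exp c • v) :=
    Real.exp_eq_exp_ℝ ▸ (NormedSpace.exp_series_hasSum_exp' c).smul_const v
  refine hasSum_le (fun n => ?_) (hasSum_exp_mulVec X v) hexp
  rw [smul_assoc]
  exact smul_le_smul_of_nonneg_left (pow_mulVec_le hX hc hv n) (by positivity)

theorem exp_add_smul_one (X : Matrix ι ι ℝ) (r : ℝ) :
    NormedSpace.exp (X + r • 1) = Real.exp r • NormedSpace.exp X := by
  have hr : NormedSpace.exp (r • (1 : Matrix ι ι ℝ)) = Real.exp r • 1 := by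
    simp [← diagonal_one, ← diagonal_smul, exp_diagonal, Real.exp_eq_exp_ℝ]
  rw [exp_add_of_commute _ _ ((Commute.one_right X).smul_right r), hr, mul_smul_comm, mul_one]

theorem exp_mulVec_apply_of_row_eq_zero {M : Matrix ι ι ℝ} {z : ι} (hz : ∀ y, M z y = 0)
    (v : ι → ℝ) : (NormedSpace.exp M *ᵥ v) z = v z := by
  refine (Pi.hasSum.1 (hasSum_exp_mulVec M v) z).unique ?_
  convert hasSum_single 0 fun n hn => ?_ using 1
  · simp
  · obtain ⟨m, rfl⟩ := Nat.exists_eq_succ_of_ne_zero hn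
    simp [pow_succ', ← mulVec_mulVec, mulVec, dotProduct, hz]

theorem exp_eq_smul_exp_add_smul_one (X : Matrix ι ι ℝ) (c : ℝ) :
    NormedSpace.exp X = Real.exp (-c) • NormedSpace.exp (X + c • 1) := by
  rw [← exp_add_smul_one, add_assoc, ← add_smul, add_neg_cancel, zero_smul, add_zero]

theorem IsMetzler.exists_nonneg_add_smul_one {M : Matrix ι ι ℝ} (hM : M.IsMetzler) :
    ∃ c : ℝ, 0 ≤ c ∧ ∀ i j, 0 ≤ (M + c • 1) i j := by
  refine ⟨∑ i, |M i i|, Finset.sum_nonneg fun i _ => abs_nonneg _, fun i j => ?_⟩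
  rcases eq_or_ne i j with rfl | hij
  · have := Finset.single_le_sum (fun k _ => abs_nonneg (M k k)) (Finset.mem_univ i)
    simp only [add_apply, smul_apply, one_apply_eq, smul_eq_mul, mul_one]
    linarith [neg_abs_le (M i i)]
  · simpa [one_apply_ne hij] using hM i j hij

theorem IsMetzler.exp_mulVec_nonneg {M : Matrix ι ι ℝ} (hM : M.IsMetzler) {v : ι → ℝ}
    (hv : 0 ≤ v) : 0 ≤ NormedSpace.exp M *ᵥ v := by
  obtain ⟨c, -, hc⟩ := hM.exists_nonneg_add_smul_one
  rw [exp_eq_smul_exp_add_smul_one M c, smul_mulVec]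
  exact smul_nonneg (Real.exp_pos _).le (Matrix.exp_mulVec_nonneg hc hv)

theorem IsMetzler.exp_mulVec_mono {M : Matrix ι ι ℝ} (hM : M.IsMetzler) {v w : ι → ℝ}
    (hvw : v ≤ w) : NormedSpace.exp M *ᵥ v ≤ NormedSpace.exp M *ᵥ w := by
  have := hM.exp_mulVec_nonneg (sub_nonneg.2 hvw)
  rwa [mulVec_sub, sub_nonneg] at this

theorem IsMetzler.exp_mulVec_one_le {M : Matrix ι ι ℝ} (hM : M.IsMetzler) (hrow : M *ᵥ 1 ≤ 0) :
    NormedSpace.exp M *ᵥ 1 ≤ 1 := by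
  obtain ⟨c, hc0, hc⟩ := hM.exists_nonneg_add_smul_one
  have hrow' : (M + c • 1) *ᵥ 1 ≤ c • 1 := by
    rw [add_mulVec, smul_mulVec, one_mulVec]
    simpa using hrow
  calc NormedSpace.exp M *ᵥ 1 = Real.exp (-c) • (NormedSpace.exp (M + c • 1) *ᵥ 1) := by
        rw [exp_eq_smul_exp_add_smul_one M c, smul_mulVec]
    _ ≤ Real.exp (-c) • (Real.exp c • 1) :=
        smul_le_smul_of_nonneg_left (exp_mulVec_le hc hc0 hrow') (Real.exp_pos _).le
    _ = 1 := by rw [smul_smul, ← Real.exp_add, neg_add_cancel, Real.exp_zero, one_smul]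

theorem IsMetzler.exp_mulVec_indicator_le {M : Matrix ι ι ℝ} (hM : M.IsMetzler)
    (hrow : M *ᵥ 1 ≤ 0) {A : Set ι} (hA : ∀ z ∉ A, ∀ y, M z y = 0) :
    NormedSpace.exp M *ᵥ A.indicator 1 ≤ A.indicator 1 := by
  intro z
  by_cases hz : z ∈ A
  · calc (NormedSpace.exp M *ᵥ A.indicator 1) z ≤ (NormedSpace.exp M *ᵥ 1) z :=
          hM.exp_mulVec_mono (Set.indicator_le_self' fun _ _ => zero_le_one) z
      _ ≤ 1 := hM.exp_mulVec_one_le hrow z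
      _ = A.indicator 1 z := by simp [hz]
  · exact (exp_mulVec_apply_of_row_eq_zero (hA z hz) _).le

theorem IsMetzler.antitoneOn_exp_smul_mulVec_indicator {M : Matrix ι ι ℝ} (hM : M.IsMetzler)
    (hrow : M *ᵥ 1 ≤ 0) {A : Set ι} (hA : ∀ z ∉ A, ∀ y, M z y = 0) :
    AntitoneOn (fun t : ℝ => NormedSpace.exp (t • M) *ᵥ A.indicator 1) (Set.Ici 0) := by
  intro u hu t _ hut
  have hs : 0 ≤ t - u := sub_nonneg.2 hut
  have hsplit :
      NormedSpace.exp (t • M) = NormedSpace.exp (u • M) * NormedSpace.exp ((t - u) • M) := by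
    rw [← exp_add_of_commute _ _ (((Commute.refl M).smul_left u).smul_right (t - u)), ← add_smul,
      add_sub_cancel]
  have hrow_s : ((t - u) • M) *ᵥ 1 ≤ 0 := by
    rw [smul_mulVec]
    exact smul_nonpos_of_nonneg_of_nonpos hs hrow
  have hA_s : ∀ z ∉ A, ∀ y, ((t - u) • M) z y = 0 := fun z hz y => by
    rw [smul_apply, hA z hz y, smul_zero]
  simp only [hsplit, ← mulVec_mulVec]
  exact (hM.smul hu).exp_mulVec_mono ((hM.smul hs).exp_mulVec_indicator_le hrow_s hA_s)

end Exp

theorem finsum_mem_eq_mulVec_indicator {m ι R : Type*} [Fintype ι] [NonAssocSemiring R]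
    (X : Matrix m ι R) (A : Set ι) (x : m) : ∑ᶠ y ∈ A, X x y = (X *ᵥ A.indicator 1) x := by
  rw [finsum_mem_def, finsum_eq_sum_of_fintype]
  refine Finset.sum_congr rfl fun y _ => ?_
  by_cases hy : y ∈ A <;> simp [hy]

end Matrix

theorem matrix_exp_truncation_mass_antitone_general {ι : Type*} [Fintype ι] [DecidableEq ι]
    (Q : Matrix ι ι ℝ) (hMetzler : ∀ x y, x ≠ y → Q x y ≥ 0)
    (hrow : ∀ x, ∑ y, Q x y ≤ 0) (A : Set ι) :
    ∀ x : ι, ∀ u t : ℝ, 0 ≤ u → u ≤ t →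
      ∑ᶠ y ∈ A, Matrix.exp ℝ (t • Q.truncation A) x y ≤
        ∑ᶠ y ∈ A, Matrix.exp ℝ (u • Q.truncation A) x y := by
  intro x u t hu hut
  have hQ : (Q.truncation A).IsMetzler := Matrix.IsMetzler.truncation hMetzler A
  have hrowA : (Q.truncation A).mulVec 1 ≤ 0 :=
    Matrix.truncation_mulVec_one_nonpos
      (fun x => by simpa [Matrix.mulVec, dotProduct] using hrow x) A
  simp only [Matrix.exp, Matrix.finsum_mem_eq_mulVec_indicator]
  exact hQ.antitoneOn_exp_smul_mulVec_indicator hrowA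
    (fun z hz => Matrix.truncation_apply_of_notMem Q hz) hu (hu.trans hut) hut x

/-- For a sub-rate matrix `Q` and a truncation `A`, the probability of not yet having left
the truncation, `t ↦ ∑ y ∈ A, exp (t • Q_A) x y`, is antitone on `[0, ∞)`. -/
theorem matrix_exp_truncation_mass_antitone {ι : Type*} [Fintype ι] [DecidableEq ι] [Nonempty ι]
    (Q : Matrix ι ι ℝ) (hMetzler : ∀ x y, x ≠ y → Q x y ≥ 0)
    (hrow : ∀ x, ∑ y, Q x y ≤ 0) (A : Set ι) :
    ∀ x : ι, ∀ u t : ℝ, 0 ≤ u → u ≤ t →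
      ∑ᶠ y ∈ A, Matrix.exp ℝ (t • Q.truncation A) x y ≤
        ∑ᶠ y ∈ A, Matrix.exp ℝ (u • Q.truncation A) x y :=
  matrix_exp_truncation_mass_antitone_general Q hMetzler hrow A
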